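/- Instability from negative bare mass: consider the one-dimensional conservation law -m_b c² γ(v_t) + eφ(q_t) + F(t) = -m_b c² γ(v₀) + eφ(q₀) + F(0) with m_b > 0, where the field energy satisfies F(t) ≥ F(0) for all t. If φ is nondecreasing along the motion (q̇_t ≥ 0 wherever defined) then v_t² ≥ 1 - [γ(v₀) + (e/m_b c²)(φ(q_t) - φ(q₀))]⁻², and if additionally φ(q) → ∞ as q → ∞ then q̇_t → c and q_t → ∞ as t → ∞. -/

import Mathlib

/-!
Since `F(t) ≥ F(0)`, energy conservation gives `γ(v_t) ≥ γ(v₀) + (e/m_b)(φ(q_t) - φ(q₀))`: with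
a negative bare mass the kinetic energy `-m_b γ` drops as the particle speeds up, so climbing the
potential forces acceleration. Inverting `γ` gives the bound on `v_t²`. In particular
`v_t ≥ v₀ > 0`, so `q_t ≥ q₀ + v₀ t → ∞`; then `φ(q_t) → ∞` and the bound squeezes `v_t` to `1`.
-/

open Filter Set
open scoped Topology

noncomputable def lorentzFactor (v : ℝ) : ℝ := (Real.sqrt (1 - v ^ 2))⁻¹

section lorentzFactor

variable {u v : ℝ}

theorem lorentzFactor_pos (hv : |v| < 1) : 0 < lorentzFactor v :=
  inv_pos.2 (Real.sqrt_pos.2 (sub_pos.2 ((sq_lt_one_iff_abs_lt_one v).2 hv)))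

theorem inv_lorentzFactor_sq (hv : |v| < 1) : (lorentzFactor v ^ 2)⁻¹ = 1 - v ^ 2 := by
  rw [lorentzFactor, inv_pow, inv_inv,
    Real.sq_sqrt (sub_nonneg.2 ((sq_lt_one_iff_abs_lt_one v).2 hv).le)]

theorem one_sub_inv_sq_le_sq_of_le_lorentzFactor {A : ℝ} (hv : |v| < 1) (hA : 0 < A)
    (h : A ≤ lorentzFactor v) : 1 - (A ^ 2)⁻¹ ≤ v ^ 2 := by
  have : (lorentzFactor v ^ 2)⁻¹ ≤ (A ^ 2)⁻¹ :=
    inv_anti₀ (by positivity) (pow_le_pow_left₀ hA.le h 2)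
  rw [inv_lorentzFactor_sq hv] at this
  linarith

theorem sq_le_sq_of_lorentzFactor_le (hu : |u| < 1) (hv : |v| < 1)
    (h : lorentzFactor u ≤ lorentzFactor v) : u ^ 2 ≤ v ^ 2 := by
  have := one_sub_inv_sq_le_sq_of_le_lorentzFactor hv (lorentzFactor_pos hu) h
  rw [inv_lorentzFactor_sq hu] at this
  linarith

end lorentzFactor

theorem add_div_mul_sub_le_of_energy_eq {m e γ₀ γ φ₀ φ F₀ F : ℝ} (hm : 0 < m) (hF : F₀ ≤ F)
    (h : -(m * γ) + e * φ + F = -(m * γ₀) + e * φ₀ + F₀) :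
    γ₀ + e / m * (φ - φ₀) ≤ γ := by
  have : m * (γ₀ + e / m * (φ - φ₀)) ≤ m * γ := by
    rw [mul_add, ← mul_assoc, mul_div_cancel₀ e hm.ne']
    linarith
  exact le_of_mul_le_mul_left this hm

theorem mul_sub_le_sub_of_hasDerivAt_of_le {f f' : ℝ → ℝ} {a c x : ℝ}
    (hf : ∀ s, HasDerivAt f (f' s) s) (hc : ∀ s, a ≤ s → c ≤ f' s) (hx : a ≤ x) :
    c * (x - a) ≤ f x - f a :=
  (convex_Ici a).mul_sub_le_image_sub_of_le_deriv
    (fun s _ => (hf s).continuousAt.continuousWithinAt)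
    (fun s _ => (hf s).differentiableAt.differentiableWithinAt)
    (fun s hs => by
      rw [interior_Ici] at hs
      exact (hf s).deriv ▸ hc s hs.le)
    a self_mem_Ici x hx hx

theorem tendsto_nhds_one_of_one_sub_inv_sq_le {α : Type*} {l : Filter α} {A v : α → ℝ}
    (hA : Tendsto A l atTop) (hlow : ∀ᶠ x in l, 1 - (A x ^ 2)⁻¹ ≤ v x ^ 2)
    (hv : ∀ᶠ x in l, 0 ≤ v x ∧ v x ≤ 1) : Tendsto v l (𝓝 1) := by
  have hlim : Tendsto (fun x => 1 - (A x ^ 2)⁻¹) l (𝓝 1) := by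
    simpa using tendsto_const_nhds.sub
      (tendsto_inv_atTop_zero.comp ((tendsto_pow_atTop two_ne_zero).comp hA))
  refine tendsto_of_tendsto_of_tendsto_of_le_of_le' hlim tendsto_const_nhds ?_
    (hv.mono fun x hx => hx.2)
  filter_upwards [hlow, hv] with x hlow ⟨h0, h1⟩
  nlinarith

/-- Instability of the Abraham model with negative bare mass: energy conservation
`-m_b γ(v_t) + eφ(q_t) + F(t) = const` with a field energy satisfying `F(t) ≥ F(0)`
forces `v_t² ≥ 1 - [γ(v₀) + (e/m_b)(φ(q_t) - φ(q₀))]⁻²`; if moreover `φ → ∞` at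
infinity then the particle runs away: `v_t → 1` (the speed of light) and
`q_t → ∞`. (Units with `c = 1`.) -/
theorem negative_bare_mass_runaway
    (m_b e : ℝ) (hm : 0 < m_b) (he : 0 < e)
    (φ : ℝ → ℝ) (hφmono : Monotone φ)
    (q v F : ℝ → ℝ)
    (hq : ∀ t, HasDerivAt q (v t) t)
    (hv1 : ∀ t, |v t| < 1)
    (hv0 : 0 < v 0)
    (hvpos : ∀ t, 0 ≤ t → 0 ≤ v t)
    (hF : ∀ t, 0 ≤ t → F 0 ≤ F t)
    (hcons : ∀ t, 0 ≤ t →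
      -(m_b * (Real.sqrt (1 - v t ^ 2))⁻¹) + e * φ (q t) + F t
        = -(m_b * (Real.sqrt (1 - v 0 ^ 2))⁻¹) + e * φ (q 0) + F 0) :
    (∀ t, 0 ≤ t →
      1 - (((Real.sqrt (1 - v 0 ^ 2))⁻¹ + (e / m_b) * (φ (q t) - φ (q 0))) ^ 2)⁻¹
        ≤ v t ^ 2)
    ∧ (Tendsto φ atTop atTop →
        Tendsto v atTop (𝓝 1) ∧ Tendsto q atTop atTop) := by
  set A : ℝ → ℝ := fun t => lorentzFactor (v 0) + e / m_b * (φ (q t) - φ (q 0))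
  have hq_ge : ∀ t, 0 ≤ t → q 0 ≤ q t := fun t ht => by
    simpa using mul_sub_le_sub_of_hasDerivAt_of_le (c := 0) hq hvpos ht
  have hA_ge : ∀ t, 0 ≤ t → lorentzFactor (v 0) ≤ A t := fun t ht =>
    le_add_of_nonneg_right (mul_nonneg (div_pos he hm).le (sub_nonneg.2 (hφmono (hq_ge t ht))))
  have hA_le : ∀ t, 0 ≤ t → A t ≤ lorentzFactor (v t) := fun t ht =>
    add_div_mul_sub_le_of_energy_eq hm (hF t ht) (hcons t ht)
  have hbound : ∀ t, 0 ≤ t → 1 - (A t ^ 2)⁻¹ ≤ v t ^ 2 := fun t ht =>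
    one_sub_inv_sq_le_sq_of_le_lorentzFactor (hv1 t)
      ((lorentzFactor_pos (hv1 0)).trans_le (hA_ge t ht)) (hA_le t ht)
  refine ⟨hbound, fun hφ => ?_⟩
  have hv_ge : ∀ t, 0 ≤ t → v 0 ≤ v t := fun t ht =>
    (pow_le_pow_iff_left₀ hv0.le (hvpos t ht) two_ne_zero).1
      (sq_le_sq_of_lorentzFactor_le (hv1 0) (hv1 t) ((hA_ge t ht).trans (hA_le t ht)))
  have hq_top : Tendsto q atTop atTop := by
    refine tendsto_atTop_mono' _ ?_
      (tendsto_atTop_add_const_left _ (q 0) (tendsto_id.const_mul_atTop hv0))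
    filter_upwards [eventually_ge_atTop 0] with t ht
    have := mul_sub_le_sub_of_hasDerivAt_of_le hq hv_ge ht
    simp only [id, sub_zero] at this ⊢
    linarith
  have hA_top : Tendsto A atTop atTop :=
    tendsto_atTop_add_const_left _ _ ((tendsto_atTop_add_const_right _ _
      (hφ.comp hq_top)).const_mul_atTop (div_pos he hm))
  refine ⟨tendsto_nhds_one_of_one_sub_inv_sq_le hA_top ?_ ?_, hq_top⟩
  all_goals filter_upwards [eventually_ge_atTop 0] with t ht
  exacts [hbound t ht, ⟨hvpos t ht, (abs_lt.1 (hv1 t)).2.le⟩]
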